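/- For all m, ℓ ≥ 3, the matrices A_∞(m,m) (block diagonal with blocks J-I_m and I_m-J) and A₂₂(m) (block matrix [[O, J-I_m],[J-I_m, O]]) have the same characteristic polynomial, but when m ≥ 3 they are not similar via any signed permutation matrix (i.e. the corresponding signed graphs are cospectral but not switching isomorphic). -/
import Mathlib


open Polynomial Matrix

/-- The all-ones matrix. -/
def Jmat (p q : Type*) : Matrix p q ℤ := Matrix.of fun _ _ => 1

/-- `A_∞(m,m) = diag(J - I_m, I_m - J)`. -/
def AinfMat (m : ℕ) : Matrix (Fin m ⊕ Fin m) (Fin m ⊕ Fin m) ℤ :=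
  Matrix.fromBlocks (Jmat (Fin m) (Fin m) - 1) 0 0 (1 - Jmat (Fin m) (Fin m))

/-- `A₂₂(m) = [[O, J-I],[J-I, O]]`. -/
def A22Mat (m : ℕ) : Matrix (Fin m ⊕ Fin m) (Fin m ⊕ Fin m) ℤ :=
  Matrix.fromBlocks 0 (Jmat (Fin m) (Fin m) - 1) (Jmat (Fin m) (Fin m) - 1) 0

/-- Two signed adjacency matrices are switching isomorphic if one is obtained from
the other by a permutation of the vertices followed by a ±1 diagonal switching. -/
def SwitchingIsomorphic {V : Type*} (A B : Matrix V V ℤ) : Prop :=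
  ∃ (e : Equiv.Perm V) (d : V → ℤ), (∀ i, d i = 1 ∨ d i = -1) ∧
    ∀ i j, B i j = d i * d j * A (e i) (e j)

section aux
variable {n : Type*} [Fintype n] [DecidableEq n] {R : Type*} [CommRing R]

lemma det_fromBlocks_symm (P Q : Matrix n n R) :
    (Matrix.fromBlocks P Q Q P).det = (P + Q).det * (P - Q).det := by
  have h : Matrix.fromBlocks P Q Q P =
      Matrix.fromBlocks 1 (-1) 0 1 * Matrix.fromBlocks (P + Q) 0 Q (P - Q) *
        Matrix.fromBlocks 1 1 0 1 := by
    ext (i | i) (j | j) <;>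
      simp [Matrix.fromBlocks_multiply, Matrix.sub_apply, Matrix.add_apply, Matrix.neg_apply,
        sub_eq_add_neg]
  rw [h, Matrix.det_mul, Matrix.det_mul, Matrix.det_fromBlocks_zero₂₁,
    Matrix.det_fromBlocks_zero₁₂, Matrix.det_fromBlocks_zero₂₁, Matrix.det_one]
  ring

lemma charpoly_fromBlocks_symm (B : Matrix n n R) :
    (Matrix.fromBlocks 0 B B 0).charpoly = B.charpoly * (-B).charpoly := by
  rw [Matrix.charpoly, Matrix.charmatrix_fromBlocks, det_fromBlocks_symm]
  have h1 : Matrix.charmatrix (0 : Matrix n n R) + -B.map Polynomial.C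
      = Matrix.charmatrix B := by
    ext i j
    simp [Matrix.charmatrix_apply, sub_eq_add_neg]
  have h2 : Matrix.charmatrix (0 : Matrix n n R) - -B.map Polynomial.C
      = Matrix.charmatrix (-B) := by
    ext i j
    simp [Matrix.charmatrix_apply, sub_eq_add_neg]
  rw [h1, h2, Matrix.charpoly, Matrix.charpoly]
end aux

/-- for `m ≥ 3`, `A_∞(m,m)` and `A₂₂(m)` are cospectral but not
switching isomorphic. -/
theorem stmt5 (m : ℕ) (hm : 3 ≤ m) :
    (AinfMat m).charpoly = (A22Mat m).charpoly ∧
      ¬ SwitchingIsomorphic (AinfMat m) (A22Mat m) := by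
  constructor
  · rw [AinfMat, A22Mat, Matrix.charpoly_fromBlocks_zero₂₁, charpoly_fromBlocks_symm,
      ← neg_sub (Jmat (Fin m) (Fin m)) 1]
  · rintro ⟨e, d, hd1, hB⟩
    have hd0 : ∀ i, d i ≠ 0 := by
      intro i; rcases hd1 i with h | h <;> rw [h] <;> norm_num
    have step : ∀ v w, A22Mat m v w ≠ 0 → (e v).isLeft = (e w).isLeft := by
      intro v w hvw
      have hA : AinfMat m (e v) (e w) ≠ 0 := by
        intro h
        apply hvw
        rw [hB, h, mul_zero]
      rcases h1 : e v with a | a <;> rcases h2 : e w with b | b <;> simp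
      · apply hA; rw [h1, h2]; simp [AinfMat]
      · apply hA; rw [h1, h2]; simp [AinfMat]
    have hJ : ∀ a b : Fin m, a ≠ b → A22Mat m (Sum.inl a) (Sum.inr b) ≠ 0 := by
      intro a b hab
      simp [A22Mat, Jmat, Matrix.sub_apply, Matrix.one_apply, hab]
    have third : ∀ a b : Fin m, ∃ c : Fin m, c ≠ a ∧ c ≠ b := by
      intro a b
      by_contra h
      push_neg at h
      have hsub : (Finset.univ : Finset (Fin m)) ⊆ {a, b} := by
        intro c _
        rcases (by tauto : c = a ∨ c = b) with rfl | rfl <;> simp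
      have h1 := Finset.card_le_card hsub
      have h2 := Finset.card_insert_le a ({b} : Finset (Fin m))
      simp at h1 h2
      omega
    have hlr : ∀ a b : Fin m, a ≠ b → (e (Sum.inl a)).isLeft = (e (Sum.inr b)).isLeft := by
      intro a b hab; exact step _ _ (hJ a b hab)
    have hll : ∀ a b : Fin m, (e (Sum.inl a)).isLeft = (e (Sum.inl b)).isLeft := by
      intro a b
      obtain ⟨c, hca, hcb⟩ := third a b
      rw [hlr a c (Ne.symm hca), ← hlr b c (Ne.symm hcb)]
    have z : Fin m := ⟨0, by omega⟩
    have hconst : ∀ v, (e v).isLeft = (e (Sum.inl z)).isLeft := by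
      rintro (a | a)
      · exact hll a z
      · obtain ⟨c, hca, _⟩ := third a a
        rw [← hlr c a hca]; exact hll c z
    obtain ⟨v, hv⟩ := e.surjective (Sum.inl z)
    obtain ⟨w, hw⟩ := e.surjective (Sum.inr z)
    have h1 := hconst v
    have h2 := hconst w
    rw [hv] at h1
    rw [hw] at h2
    rw [← h1] at h2
    simp at h2
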